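/- arXiv:2006.00661 — 2 statements merged into one kernel-verified Lean document; each statement's English description precedes it below -/
import Mathlib

section
/- (Approximate greedy on a k-system.) Let f : 2^N → ℝ be non-negative, monotone, and submodular, let (N, I) be a k-system, and suppose the greedy procedure produces S = {e₁,…,e_m} ∈ I (in this order, stopping when no element can be added) such that at each step i and every element e with S_{i−1} ∪ {e} ∈ I one has Δf(e | S_{i−1}) ≤ Δf(eᵢ | S_{i−1}) + 2βσᵢ for some nonnegative error terms σᵢ. Then for every feasible set C ∈ I: f(S) + (2k/(k+1))·β·Σᵢ σᵢ ≥ f(S ∪ C)/(k+1). -/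
def Submodular {α : Type*} [DecidableEq α] (f : Finset α → ℝ) : Prop :=
  ∀ A B : Finset α, A ⊆ B → ∀ e ∉ B,
    f (insert e B) - f B ≤ f (insert e A) - f A

def MaximalIn {α : Type*} [DecidableEq α] (I : Finset α → Prop)
    (S A : Finset α) : Prop :=
  A ⊆ S ∧ I A ∧ ∀ e ∈ S, e ∉ A → ¬ I (insert e A)

def IsKSystem {α : Type*} [DecidableEq α] (k : ℕ) (I : Finset α → Prop) : Prop :=
  I ∅ ∧ (∀ A B : Finset α, A ⊆ B → I B → I A) ∧
  (∀ S A B : Finset α, MaximalIn I S A → MaximalIn I S B → A.card ≤ k * B.card)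

/-!
Write `S i` for the first `i` greedy elements and give each `x ∈ C \ S m` the deadline `d x`, the
first `i` with `insert x (S i)` infeasible. At every step `j < d x` the element `x` was a feasible
candidate, so by submodularity its final marginal gain `Δf(x | S m)` is at most the greedy gain
`g j = Δf(e j | S j) + 2βσ j`. The elements of `C` due by step `i` are independent and cannot extend
`S i`, so the `k`-system property allows at most `k * i` of them. Hence they can be scheduled into
the `m` steps with at most `k` per step, giving `∑ Δf(x | S m) ≤ k * ∑ g j`, where the sum of the
`g j` telescopes to `f (S m) - f ∅ + 2β ∑ σ j`. Submodularity bounds `f (S m ∪ C)` by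
`f (S m) + ∑ Δf(x | S m)`.
-/

open Finset

section KSystem

variable {α : Type*} [DecidableEq α] {I : Finset α → Prop}

theorem exists_maximalIn_superset {U A : Finset α} (hA : I A) (hAU : A ⊆ U) :
    ∃ B, A ⊆ B ∧ MaximalIn I U B := by
  classical
  obtain ⟨B, hB, hBmax⟩ := (U.powerset.filter fun B => A ⊆ B ∧ I B).exists_max_image card
    ⟨A, mem_filter.2 ⟨mem_powerset.2 hAU, subset_rfl, hA⟩⟩
  simp only [mem_filter, mem_powerset] at hB hBmax
  refine ⟨B, hB.2.1, hB.1, hB.2.2, fun x hxU hxB hx => ?_⟩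
  have := hBmax (insert x B) ⟨insert_subset hxU hB.1, hB.2.1.trans (subset_insert x B), hx⟩
  rw [card_insert_of_notMem hxB] at this
  omega

theorem IsKSystem.card_le_mul_card {k : ℕ} (hI : IsKSystem k I) {T K : Finset α}
    (hT : I T) (hK : I K) (hTK : ∀ x ∈ K, x ∉ T → ¬ I (insert x T)) :
    #K ≤ k * #T := by
  obtain ⟨B, hKB, hB⟩ := exists_maximalIn_superset hK (subset_union_right : K ⊆ T ∪ K)
  have hTmax : MaximalIn I (T ∪ K) T :=
    ⟨subset_union_left, hT, fun x hx hxT => hTK x ((mem_union.1 hx).resolve_left hxT) hxT⟩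
  exact (card_le_card hKB).trans (hI.2.2 _ _ _ hB hTmax)

end KSystem

theorem Submodular.le_add_sum_marginal {α : Type*} [DecidableEq α] {f : Finset α → ℝ}
    (hsub : Submodular f) (R T : Finset α) :
    f (R ∪ T) ≤ f R + ∑ x ∈ T \ R, (f (insert x R) - f R) := by
  suffices h : ∀ T, Disjoint R T → f (R ∪ T) ≤ f R + ∑ x ∈ T, (f (insert x R) - f R) by
    rw [← union_sdiff_self_eq_union]
    exact h _ disjoint_sdiff
  intro T hRT
  induction T using Finset.induction_on with
  | empty => simp
  | insert a T haT ih =>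
    rw [disjoint_insert_right] at hRT
    rw [union_insert, sum_insert haT]
    have := hsub R (R ∪ T) subset_union_left a (by simp [hRT.1, haT])
    linarith [ih hRT.2]

theorem sum_le_mul_sum_range_of_deadlines {ι : Type*} [DecidableEq ι] (k : ℕ)
    (g : ℕ → ℝ) (hg : ∀ i, 0 ≤ g i) (h : ι → ℝ) (d : ι → ℕ) (m : ℕ) (A : Finset ι)
    (hval : ∀ x ∈ A, ∀ j < m, j < d x → h x ≤ g j)
    (hdue : ∀ i < m, #(A.filter (d · ≤ i)) ≤ k * i) (hA : #A ≤ k * m) :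
    ∑ x ∈ A, h x ≤ k * ∑ i ∈ range m, g i := by
  induction m generalizing A with
  | zero => simp [card_eq_zero.1 (Nat.le_zero.1 (by simpa using hA))]
  | succ m ih =>
    rw [Nat.mul_succ] at hA
    have hlate : #A - k * m ≤ #(A.filter (¬ d · ≤ m)) := by
      have := card_filter_add_card_filter_not (s := A) (fun x => d x ≤ m)
      have := hdue m (Nat.lt_succ_self m)
      omega
    -- `T` collects the items placed in the last slot `m`
    obtain ⟨T, hTlate, hT⟩ := exists_subset_card_eq hlate
    have hTA : T ⊆ A := hTlate.trans (filter_subset _ A)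
    have hrest : ∑ x ∈ A \ T, h x ≤ k * ∑ i ∈ range m, g i := by
      refine ih (A \ T) (fun x hx j hj => hval x (sdiff_subset hx) j (by omega))
        (fun i hi => (card_le_card (filter_subset_filter _ sdiff_subset)).trans
          (hdue i (by omega))) ?_
      rw [card_sdiff_of_subset hTA]
      omega
    have hlast : ∑ x ∈ T, h x ≤ k * g m := by
      calc ∑ x ∈ T, h x ≤ ∑ _x ∈ T, g m := sum_le_sum fun x hx => by
            have hx' := mem_filter.1 (hTlate hx)
            exact hval x hx'.1 m (Nat.lt_succ_self m) (by omega)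
        _ = #T * g m := by rw [sum_const, nsmul_eq_mul]
        _ ≤ k * g m := mul_le_mul_of_nonneg_right (by norm_cast; omega) (hg m)
    rw [← sum_sdiff hTA, sum_range_succ]
    linarith

theorem IsKSystem.sum_marginal_le_mul_sum {α : Type*} [DecidableEq α] {k : ℕ}
    {I : Finset α → Prop} (hI : IsKSystem k I) {f : Finset α → ℝ} (hsub : Submodular f)
    (S : ℕ → Finset α) (hS : Monotone S) (hScard : ∀ i, #(S i) ≤ i) (m : ℕ) (hSm : I (S m))
    (hstop : ∀ x ∉ S m, ¬ I (insert x (S m))) (g : ℕ → ℝ) (hg : ∀ i, 0 ≤ g i)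
    (hgreedy : ∀ i < m, ∀ x, I (insert x (S i)) → f (insert x (S i)) - f (S i) ≤ g i)
    (C : Finset α) (hC : I C) :
    ∑ x ∈ C \ S m, (f (insert x (S m)) - f (S m)) ≤ k * ∑ i ∈ range m, g i := by
  let d : α → ℕ := fun x => sInf {i | ¬ I (insert x (S i))}
  have hfeas : ∀ x j, j < d x → I (insert x (S j)) :=
    fun x j hj => not_not.1 (Nat.notMem_of_lt_sInf hj)
  have hinfeas : ∀ x ∈ C \ S m, ∀ i, d x ≤ i → ¬ I (insert x (S i)) :=
    fun x hx i hi hIi => Nat.sInf_mem (s := {i | ¬ I (insert x (S i))})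
      ⟨m, hstop x (mem_sdiff.1 hx).2⟩ (hI.2.1 _ _ (insert_subset_insert x (hS hi)) hIi)
  have hdue : ∀ i ≤ m, ∀ K ⊆ C \ S m, (∀ x ∈ K, ¬ I (insert x (S i))) → #K ≤ k * i :=
    fun i hi K hK hKinf => (hI.card_le_mul_card (hI.2.1 _ _ (hS hi) hSm)
      (hI.2.1 _ _ (hK.trans sdiff_subset) hC) fun x hx _ => hKinf x hx).trans
      (Nat.mul_le_mul_left k (hScard i))
  refine sum_le_mul_sum_range_of_deadlines k g hg _ d m _ ?_ ?_ ?_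
  · intro x hx j hj hjd
    exact (hsub _ _ (hS hj.le) x (mem_sdiff.1 hx).2).trans (hgreedy j hj x (hfeas x j hjd))
  · intro i hi
    exact hdue i hi.le _ (filter_subset _ _) fun x hx =>
      hinfeas x (mem_filter.1 hx).1 i (mem_filter.1 hx).2
  · exact hdue m le_rfl _ subset_rfl fun x hx => hstop x (mem_sdiff.1 hx).2

theorem stmt7_general {α : Type*} [DecidableEq α] (k : ℕ) (I : Finset α → Prop)
    (hI : IsKSystem k I)
    (f : Finset α → ℝ) (hnn : ∀ S : Finset α, 0 ≤ f S)
    (hmono : ∀ A B : Finset α, A ⊆ B → f A ≤ f B) (hsub : Submodular f)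
    (m : ℕ) (e : ℕ → α)
    (β : ℝ) (hβ : 0 ≤ β) (σ : ℕ → ℝ) (hσ : ∀ i, 0 ≤ σ i)
    (hSfeas : I ((Finset.range m).image e))
    (hstop : ∀ x : α, x ∉ (Finset.range m).image e →
      ¬ I (insert x ((Finset.range m).image e)))
    (hgreedy : ∀ i < m, ∀ x : α, I (insert x ((Finset.range i).image e)) →
      f (insert x ((Finset.range i).image e)) - f ((Finset.range i).image e) ≤
      f (insert (e i) ((Finset.range i).image e)) - f ((Finset.range i).image e)
        + 2 * β * σ i)
    (C : Finset α) (hC : I C) :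
    f ((Finset.range m).image e ∪ C) / ((k : ℝ) + 1) ≤
      f ((Finset.range m).image e) +
        (2 * (k : ℝ) / ((k : ℝ) + 1)) * β * ∑ i ∈ Finset.range m, σ i := by
  set S : ℕ → Finset α := fun i => (range i).image e with hS
  have hSsucc : ∀ i, insert (e i) (S i) = S (i + 1) := fun i => by
    simp only [hS, range_add_one, image_insert]
  have hSmono : Monotone S := fun i j hij => image_subset_image (range_subset_range.2 hij)
  have hgain : ∀ i, 0 ≤ f (S (i + 1)) - f (S i) + 2 * β * σ i := fun i => by
    have := hmono _ _ (hSmono i.le_succ)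
    linarith [mul_nonneg hβ (hσ i)]
  have hcharge := hI.sum_marginal_le_mul_sum hsub S hSmono
    (fun i => card_image_le.trans (card_range i).le) m hSfeas hstop _ hgain
    (fun i hi x hx => hSsucc i ▸ hgreedy i hi x hx) C hC
  have htelescope : ∑ i ∈ range m, (f (S (i + 1)) - f (S i) + 2 * β * σ i) =
      f (S m) - f ∅ + 2 * β * ∑ i ∈ range m, σ i := by
    rw [sum_add_distrib, sum_range_sub (fun i => f (S i)), ← mul_sum]
    simp [hS]
  have hunion := hsub.le_add_sum_marginal (S m) C
  rw [htelescope] at hcharge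
  have hk : (0 : ℝ) < k + 1 := by positivity
  rw [div_le_iff₀ hk, add_mul, show 2 * (k : ℝ) / (k + 1) * β * (∑ i ∈ range m, σ i) * (k + 1) =
    2 * k * β * ∑ i ∈ range m, σ i by field_simp]
  change f (S m ∪ C) ≤ f (S m) * (k + 1) + _
  linarith [mul_nonneg k.cast_nonneg (hnn ∅)]

/-- Approximate greedy on a `k`-system.  The greedy procedure produces
`S = {e₀, …, e_{m-1}}` (in this order, stopping when no element can be added),
and at each step `i` every feasible candidate `x` satisfies
`Δf(x | Sᵢ) ≤ Δf(eᵢ | Sᵢ) + 2βσᵢ`.  Then for every feasible `C`,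
`f(S) + (2k/(k+1))·β·Σᵢ σᵢ ≥ f(S ∪ C)/(k+1)`. -/
theorem stmt7 {α : Type*} [DecidableEq α] (k : ℕ) (I : Finset α → Prop)
    (hI : IsKSystem k I)
    (f : Finset α → ℝ) (hnn : ∀ S : Finset α, 0 ≤ f S)
    (hmono : ∀ A B : Finset α, A ⊆ B → f A ≤ f B) (hsub : Submodular f)
    (m : ℕ) (e : ℕ → α) (hinj : ∀ i < m, ∀ j < m, e i = e j → i = j)
    (β : ℝ) (hβ : 0 ≤ β) (σ : ℕ → ℝ) (hσ : ∀ i, 0 ≤ σ i)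
    (hSfeas : I ((Finset.range m).image e))
    (hstop : ∀ x : α, x ∉ (Finset.range m).image e →
      ¬ I (insert x ((Finset.range m).image e)))
    (hgreedy : ∀ i < m, ∀ x : α, I (insert x ((Finset.range i).image e)) →
      f (insert x ((Finset.range i).image e)) - f ((Finset.range i).image e) ≤
      f (insert (e i) ((Finset.range i).image e)) - f ((Finset.range i).image e)
        + 2 * β * σ i)
    (C : Finset α) (hC : I C) :
    f ((Finset.range m).image e ∪ C) / ((k : ℝ) + 1) ≤
      f ((Finset.range m).image e) +
        (2 * (k : ℝ) / ((k : ℝ) + 1)) * β * ∑ i ∈ Finset.range m, σ i :=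
  stmt7_general k I hI f hnn hmono hsub m e β hβ σ hσ hSfeas hstop hgreedy C hC
end

section
/- (Case-one threshold bound.) Suppose f is non-negative monotone submodular, costs c_j : N → (0,1] for j = 1..l with c(e) := Σ_j c_j(e), and S = {e₁,…,e_m} satisfies Δf(eᵢ | S_{i−1}) + 2βσᵢ ≥ ρ·c(eᵢ) for every i, and there is e' ∉ S with f(S) + 2βΣᵢσᵢ ≥ ρ·c(e') such that S + e' violates some knapsack constraint (c_j(S) + c_j(e') > 1 for some j). Then f(S) + 2βΣᵢ σᵢ ≥ ρ/2. -/
open Finset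

section Greedy

variable {α : Type*} [DecidableEq α] (f : Finset α → ℝ) (e : ℕ → α)

theorem sum_range_marginal_gain_eq (m : ℕ) :
    ∑ i ∈ range m, (f (insert (e i) ((range i).image e)) - f ((range i).image e)) =
      f ((range m).image e) - f ∅ := by
  have hinsert : ∀ i, insert (e i) ((range i).image e) = (range (i + 1)).image e := fun i => by
    rw [range_add_one, image_insert]
  simp_rw [hinsert]
  simpa using sum_range_sub (fun i => f ((range i).image e)) m

theorem mul_sum_cost_image_le (hf : 0 ≤ f ∅) {c : α → ℝ} (hc : ∀ x, 0 ≤ c x)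
    {ρ : ℝ} (hρ : 0 ≤ ρ) {m : ℕ} {b : ℕ → ℝ}
    (hstep : ∀ i < m, ρ * c (e i) ≤
      f (insert (e i) ((range i).image e)) - f ((range i).image e) + b i) :
    ρ * ∑ x ∈ (range m).image e, c x ≤ f ((range m).image e) + ∑ i ∈ range m, b i :=
  calc ρ * ∑ x ∈ (range m).image e, c x
      ≤ ∑ i ∈ range m, ρ * c (e i) := by
        rw [← mul_sum]
        exact mul_le_mul_of_nonneg_left (sum_image_le_of_nonneg fun x _ => hc x) hρ
    _ ≤ ∑ i ∈ range m,
          (f (insert (e i) ((range i).image e)) - f ((range i).image e) + b i) :=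
        sum_le_sum fun i hi => hstep i (mem_range.mp hi)
    _ ≤ f ((range m).image e) + ∑ i ∈ range m, b i := by
        rw [sum_add_distrib, sum_range_marginal_gain_eq]
        linarith

end Greedy

theorem stmt9_general {α : Type*} [DecidableEq α] (l : ℕ) (cj : Fin l → α → ℝ)
    (hcj : ∀ j x, 0 < cj j x ∧ cj j x ≤ 1)
    (f : Finset α → ℝ) (hnn : ∀ S : Finset α, 0 ≤ f S)
    (m : ℕ) (e : ℕ → α)
    (ρ β : ℝ) (hρ : 0 < ρ) (σ : ℕ → ℝ)
    (hstep : ∀ i < m, ρ * (∑ j, cj j (e i)) ≤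
      f (insert (e i) ((Finset.range i).image e)) - f ((Finset.range i).image e)
        + 2 * β * σ i)
    (e' : α)
    (hucb : ρ * (∑ j, cj j e') ≤
      f ((Finset.range m).image e) + 2 * β * ∑ i ∈ Finset.range m, σ i)
    (hviol : ∃ j, 1 < (∑ x ∈ (Finset.range m).image e, cj j x) + cj j e') :
    ρ / 2 ≤ f ((Finset.range m).image e) + 2 * β * ∑ i ∈ Finset.range m, σ i := by
  obtain ⟨j, hj⟩ := hviol
  have hsingle : ∀ x, ρ * cj j x ≤ ρ * ∑ k, cj k x := fun x =>
    mul_le_mul_of_nonneg_left (single_le_sum (fun k _ => (hcj k x).1.le) (mem_univ j)) hρ.le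
  have hS := mul_sum_cost_image_le f e (hnn ∅) (fun x => (hcj j x).1.le) hρ.le
    (b := fun i => 2 * β * σ i) fun i hi => (hsingle (e i)).trans (hstep i hi)
  rw [← mul_sum] at hS
  have hρ_lt : ρ < ρ * (∑ x ∈ (range m).image e, cj j x + cj j e') := by
    simpa using mul_lt_mul_of_pos_left hj hρ
  linarith [hsingle e']

/-- Case-one threshold bound: if every selected element `eᵢ` satisfies
`Δf(eᵢ|Sᵢ) + 2βσᵢ ≥ ρ·c(eᵢ)` and there is `e' ∉ S` with
`f(S) + 2βΣσ ≥ ρ·c(e')` such that `S + e'` violates a knapsack constraint,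
then `f(S) + 2βΣσ ≥ ρ/2`. -/
theorem stmt9 {α : Type*} [DecidableEq α] (l : ℕ) (cj : Fin l → α → ℝ)
    (hcj : ∀ j x, 0 < cj j x ∧ cj j x ≤ 1)
    (f : Finset α → ℝ) (hnn : ∀ S : Finset α, 0 ≤ f S)
    (hmono : ∀ A B : Finset α, A ⊆ B → f A ≤ f B) (hsub : Submodular f)
    (m : ℕ) (e : ℕ → α) (hinj : ∀ i < m, ∀ j < m, e i = e j → i = j)
    (ρ β : ℝ) (hρ : 0 < ρ) (hβ : 0 ≤ β) (σ : ℕ → ℝ) (hσ : ∀ i, 0 ≤ σ i)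
    (hstep : ∀ i < m, ρ * (∑ j, cj j (e i)) ≤
      f (insert (e i) ((Finset.range i).image e)) - f ((Finset.range i).image e)
        + 2 * β * σ i)
    (e' : α) (he' : e' ∉ (Finset.range m).image e)
    (hucb : ρ * (∑ j, cj j e') ≤
      f ((Finset.range m).image e) + 2 * β * ∑ i ∈ Finset.range m, σ i)
    (hviol : ∃ j, 1 < (∑ x ∈ (Finset.range m).image e, cj j x) + cj j e') :
    ρ / 2 ≤ f ((Finset.range m).image e) + 2 * β * ∑ i ∈ Finset.range m, σ i :=
  stmt9_general l cj hcj f hnn m e ρ β hρ σ hstep e' hucb hviol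
end
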